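/- Let u : ℝ≥0 → ℝ≥0 be nondecreasing, doubling and sublinear, let L ≥ 1, and let f : (X,x₀) → (Y,y₀) be a map between pointed metric spaces that is (L,u,x₀)-Lipschitz, (L,u,x₀)-expansive and (u,y₀)-surjective. Let (x_n) be a sequence in X and (σ_n) positive reals with σ_n → ∞ and u(|x_n|)/σ_n → 0. If a sequence (y_n) in Y satisfies d(f(x_n), y_n) ≤ M·σ_n for all n and some M ≥ 0, then there exist a sequence (x'_n) in X and a constant M' ≥ 0 such that d(x_n, x'_n) ≤ M'·σ_n for all n and d(f(x'_n), y_n)/σ_n → 0 as n → ∞. (That is, the induced map between asymptotic cones is surjective.) -/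

import Mathlib

open Filter Topology

/-!
Take for `x'ₙ` a `u`-approximate preimage of `yₙ`, so that `d(f x'ₙ, yₙ) ≤ u(|yₙ|)`. Since
`|yₙ| ≤ M σₙ + (L + 1)|xₙ| + O(1)`, doubling gives `u(|yₙ|) ≲ u(M σₙ) + u(|xₙ|) + O(1)`, which is
`o(σₙ)` by sublinearity and `u(|xₙ|) = o(σₙ)`. In the expansivity inequality for
`xₙ, x'ₙ`, doubling and sublinearity bound the error term by `C u(|xₙ|) + d(xₙ, x'ₙ)/(2L) + O(1)`,
so half of the expansion survives and `d(xₙ, x'ₙ) ≤ 2L (M σₙ + u(|yₙ|) + C u(|xₙ|) + O(1)) = O(σₙ)`.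
-/

section Gauge

variable {u : ℝ → ℝ} {C : ℝ}

theorem apply_two_pow_mul_le (hC0 : 0 ≤ C) (hC : ∀ r, 0 ≤ r → u (2 * r) ≤ C * u r) (k : ℕ)
    {r : ℝ} (hr : 0 ≤ r) : u (2 ^ k * r) ≤ C ^ k * u r := by
  induction k with
  | zero => simp
  | succ k ih =>
    calc u (2 ^ (k + 1) * r) = u (2 * (2 ^ k * r)) := by ring_nf
      _ ≤ C * u (2 ^ k * r) := hC _ (by positivity)
      _ ≤ C * (C ^ k * u r) := by gcongr
      _ = C ^ (k + 1) * u r := by ring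

theorem exists_apply_mul_le (humono : MonotoneOn u (Set.Ici 0)) (hC0 : 0 ≤ C)
    (hC : ∀ r, 0 ≤ r → u (2 * r) ≤ C * u r) {K : ℝ} (hK : 0 ≤ K) :
    ∃ A, ∀ r, 0 ≤ r → u (K * r) ≤ A * u r := by
  obtain ⟨k, hk⟩ := pow_unbounded_of_one_lt K one_lt_two
  refine ⟨C ^ k, fun r hr => ?_⟩
  calc u (K * r) ≤ u (2 ^ k * r) :=
        humono (Set.mem_Ici.2 (by positivity)) (Set.mem_Ici.2 (by positivity)) (by gcongr)
    _ ≤ C ^ k * u r := apply_two_pow_mul_le hC0 hC k hr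

theorem apply_add_le (hu0 : ∀ r, 0 ≤ r → 0 ≤ u r) (humono : MonotoneOn u (Set.Ici 0))
    (hC0 : 0 ≤ C) (hC : ∀ r, 0 ≤ r → u (2 * r) ≤ C * u r) {a b : ℝ} (ha : 0 ≤ a) (hb : 0 ≤ b) :
    u (a + b) ≤ C * (u a + u b) := by
  wlog hab : a ≤ b generalizing a b
  · rw [add_comm a, add_comm (u a)]
    exact this hb ha (le_of_not_ge hab)
  calc u (a + b) ≤ u (2 * b) :=
        humono (Set.mem_Ici.2 (by positivity)) (Set.mem_Ici.2 (by positivity)) (by linarith)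
    _ ≤ C * u b := hC b hb
    _ ≤ C * (u a + u b) := by gcongr; exact le_add_of_nonneg_left (hu0 a ha)

theorem exists_apply_le_mul_add (humono : MonotoneOn u (Set.Ici 0))
    (husub : Tendsto (fun r => u r / r) atTop (𝓝 0)) {ε : ℝ} (hε : 0 < ε) :
    ∃ B, 0 ≤ B ∧ ∀ r, 0 ≤ r → u r ≤ ε * r + B := by
  obtain ⟨R, hR⟩ := eventually_atTop.1 (husub.eventually_le_const hε)
  set R' := max R 1
  have hR' : 0 < R' := zero_lt_one.trans_le (le_max_right _ _)
  refine ⟨max (u R') 0, le_max_right _ _, fun r hr => ?_⟩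
  rcases le_total r R' with h | h
  · have : u r ≤ u R' := humono (Set.mem_Ici.2 hr) (Set.mem_Ici.2 hR'.le) h
    linarith [le_max_left (u R') 0, mul_nonneg hε.le hr]
  · have hr' : 0 < r := hR'.trans_le h
    have : u r ≤ ε * r := (div_le_iff₀ hr').1 (hR r ((le_max_left _ _).trans h))
    linarith [le_max_right (u R') 0]

theorem exists_apply_add_le_mul_add (hu0 : ∀ r, 0 ≤ r → 0 ≤ u r)
    (humono : MonotoneOn u (Set.Ici 0)) (hC0 : 0 < C) (hC : ∀ r, 0 ≤ r → u (2 * r) ≤ C * u r)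
    (husub : Tendsto (fun r => u r / r) atTop (𝓝 0)) {ε : ℝ} (hε : 0 < ε) :
    ∃ B, ∀ a r, 0 ≤ a → 0 ≤ r → u (a + r) ≤ C * u a + ε * r + B := by
  obtain ⟨B, -, hB⟩ := exists_apply_le_mul_add humono husub (div_pos hε hC0)
  refine ⟨C * B, fun a r ha hr => ?_⟩
  calc u (a + r) ≤ C * (u a + u r) := apply_add_le hu0 humono hC0.le hC ha hr
    _ ≤ C * (u a + (ε / C * r + B)) := by gcongr; exact hB r hr
    _ = C * u a + ε * r + C * B := by field_simp; ring

theorem tendsto_apply_const_mul_div_atTop (husub : Tendsto (fun r => u r / r) atTop (𝓝 0))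
    {K : ℝ} (hK : 0 ≤ K) : Tendsto (fun t => u (K * t) / t) atTop (𝓝 0) := by
  rcases hK.eq_or_lt with rfl | hK
  · simpa using tendsto_const_nhds.div_atTop tendsto_id
  · have h := (husub.comp (tendsto_id.const_mul_atTop hK)).const_mul K
    rw [mul_zero] at h
    refine h.congr' ?_
    filter_upwards [eventually_gt_atTop 0] with t ht
    simp only [Function.comp_apply, id]
    field_simp

theorem exists_le_mul_of_tendsto_div {g σ : ℕ → ℝ} {c : ℝ} (hσ : ∀ n, 0 < σ n)
    (h : Tendsto (fun n => g n / σ n) atTop (𝓝 c)) : ∃ K, 0 ≤ K ∧ ∀ n, g n ≤ K * σ n := by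
  obtain ⟨K, hK⟩ := h.bddAbove_range
  refine ⟨max K 0, le_max_right _ _, fun n => ?_⟩
  rw [← div_le_iff₀ (hσ n)]
  exact (hK (Set.mem_range_self n)).trans (le_max_left _ _)

theorem tendsto_apply_div_of_le_mul_add (hu0 : ∀ r, 0 ≤ r → 0 ≤ u r)
    (humono : MonotoneOn u (Set.Ici 0)) (hC0 : 0 ≤ C) (hC : ∀ r, 0 ≤ r → u (2 * r) ≤ C * u r)
    (husub : Tendsto (fun r => u r / r) atTop (𝓝 0)) {σ s t : ℕ → ℝ} (hσpos : ∀ n, 0 < σ n)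
    (hσ : Tendsto σ atTop atTop) {K A B : ℝ} (hK : 0 ≤ K) (hA : 0 ≤ A) (hB : 0 ≤ B)
    (hs : ∀ n, 0 ≤ s n) (ht : ∀ n, 0 ≤ t n) (hst : ∀ n, s n ≤ K * σ n + (A * t n + B))
    (hut : Tendsto (fun n => u (t n) / σ n) atTop (𝓝 0)) :
    Tendsto (fun n => u (s n) / σ n) atTop (𝓝 0) := by
  obtain ⟨A', hA'⟩ := exists_apply_mul_le humono hC0 hC hA
  have hbound : ∀ n, u (s n) ≤ C * u (K * σ n) + C ^ 2 * A' * u (t n) + C ^ 2 * u B := by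
    intro n
    have hσn := (hσpos n).le
    have htn := ht n
    calc u (s n) ≤ u (K * σ n + (A * t n + B)) :=
          humono (Set.mem_Ici.2 (hs n)) (Set.mem_Ici.2 (by positivity)) (hst n)
      _ ≤ C * (u (K * σ n) + u (A * t n + B)) :=
          apply_add_le hu0 humono hC0 hC (by positivity) (by positivity)
      _ ≤ C * (u (K * σ n) + C * (u (A * t n) + u B)) := by
          gcongr; exact apply_add_le hu0 humono hC0 hC (by positivity) hB
      _ ≤ C * (u (K * σ n) + C * (A' * u (t n) + u B)) := by gcongr; exact hA' _ htn
      _ = C * u (K * σ n) + C ^ 2 * A' * u (t n) + C ^ 2 * u B := by ring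
  have hlim : Tendsto (fun n => C * (u (K * σ n) / σ n) + C ^ 2 * A' * (u (t n) / σ n)
      + C ^ 2 * u B / σ n) atTop (𝓝 0) := by
    simpa using ((((tendsto_apply_const_mul_div_atTop husub hK).comp hσ).const_mul C).add
      (hut.const_mul _)).add (tendsto_const_nhds.div_atTop hσ)
  refine squeeze_zero (fun n => div_nonneg (hu0 _ (hs n)) (hσpos n).le) (fun n => ?_) hlim
  calc u (s n) / σ n ≤ (C * u (K * σ n) + C ^ 2 * A' * u (t n) + C ^ 2 * u B) / σ n :=
        div_le_div_of_nonneg_right (hbound n) (hσpos n).le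
    _ = _ := by ring

end Gauge

section Metric

variable {X Y : Type*} [PseudoMetricSpace X] [PseudoMetricSpace Y] {u : ℝ → ℝ} {L C : ℝ}
  {x₀ : X} {f : X → Y}

theorem dist_le_of_expansive (humono : MonotoneOn u (Set.Ici 0)) (hL : 0 < L) {B : ℝ}
    (hfe : ∀ x x', L⁻¹ * dist x x' - u (max (dist x x₀) (dist x' x₀)) ≤ dist (f x) (f x'))
    (hB : ∀ a r, 0 ≤ a → 0 ≤ r → u (a + r) ≤ C * u a + (2 * L)⁻¹ * r + B) (x x' : X) :
    dist x x' ≤ 2 * L * (dist (f x) (f x') + C * u (dist x x₀) + B) := by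
  have hmax : max (dist x x₀) (dist x' x₀) ≤ dist x x₀ + dist x x' :=
    max_le (le_add_of_nonneg_right dist_nonneg) (by linarith [dist_triangle_left x' x₀ x])
  have hu : u (max (dist x x₀) (dist x' x₀)) ≤ C * u (dist x x₀) + (2 * L)⁻¹ * dist x x' + B :=
    (humono (Set.mem_Ici.2 (le_max_of_le_left dist_nonneg))
      (Set.mem_Ici.2 (by positivity)) hmax).trans (hB _ _ dist_nonneg dist_nonneg)
  have hhalf : L⁻¹ = 2 * (2 * L)⁻¹ := by field_simp
  have key : (2 * L)⁻¹ * dist x x' ≤ dist (f x) (f x') + C * u (dist x x₀) + B := by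
    have := hfe x x'
    rw [hhalf] at this
    linarith
  calc dist x x' = 2 * L * ((2 * L)⁻¹ * dist x x') := by field_simp
    _ ≤ _ := by gcongr

theorem tendsto_apply_dist_div_of_dist_le_mul (hu0 : ∀ r, 0 ≤ r → 0 ≤ u r)
    (humono : MonotoneOn u (Set.Ici 0)) (hC0 : 0 ≤ C) (hC : ∀ r, 0 ≤ r → u (2 * r) ≤ C * u r)
    (husub : Tendsto (fun r => u r / r) atTop (𝓝 0)) (hL : 0 ≤ L) (y₀ : Y)
    (hf : ∀ x x', dist (f x) (f x') ≤ L * dist x x' + u (max (dist x x₀) (dist x' x₀)))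
    {x : ℕ → X} {σ : ℕ → ℝ} (hσpos : ∀ n, 0 < σ n) (hσ : Tendsto σ atTop atTop)
    (hadm : Tendsto (fun n => u (dist (x n) x₀) / σ n) atTop (𝓝 0))
    {y : ℕ → Y} {M : ℝ} (hM : 0 ≤ M) (hy : ∀ n, dist (f (x n)) (y n) ≤ M * σ n) :
    Tendsto (fun n => u (dist (y n) y₀) / σ n) atTop (𝓝 0) := by
  obtain ⟨B, hB0, hB⟩ := exists_apply_le_mul_add humono husub one_pos
  refine tendsto_apply_div_of_le_mul_add hu0 humono hC0 hC husub hσpos hσ hM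
    (by linarith : 0 ≤ L + 1) (add_nonneg hB0 (dist_nonneg (x := f x₀) (y := y₀)))
    (fun _ => dist_nonneg) (fun _ => dist_nonneg) (fun n => ?_) hadm
  have hfx : dist (f (x n)) (f x₀) ≤ L * dist (x n) x₀ + u (dist (x n) x₀) := by
    simpa [max_eq_left dist_nonneg] using hf (x n) x₀
  have hux := hB (dist (x n) x₀) dist_nonneg
  linarith [dist_triangle4 (y n) (f (x n)) (f x₀) y₀, dist_comm (y n) (f (x n)), hy n]

end Metric

/-- For an `O(u)`-bilipschitz equivalence and `u`-admissible cone
data, any sequence in `Y` staying at distance `O(σₙ)` from `(f xₙ)` can be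
approximated (to sublinear precision relative to `σₙ`) by the image of a
sequence in the precone of `X`; i.e. the induced map between asymptotic cones
is surjective. -/
theorem sbe_cone_map_surjective
    {X Y : Type*} [MetricSpace X] [MetricSpace Y]
    (u : ℝ → ℝ)
    (hu0 : ∀ r, 0 ≤ r → 0 ≤ u r)
    (humono : MonotoneOn u (Set.Ici 0))
    (hudbl : ∃ C, 1 ≤ C ∧ ∀ r, 0 ≤ r → u (2 * r) ≤ C * u r)
    (husub : Tendsto (fun r => u r / r) atTop (𝓝 0))
    (L : ℝ) (hL : 1 ≤ L) (x₀ : X) (y₀ : Y) (f : X → Y)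
    (hf : ∀ x x', dist (f x) (f x') ≤ L * dist x x' + u (max (dist x x₀) (dist x' x₀)))
    (hfe : ∀ x x', L⁻¹ * dist x x' - u (max (dist x x₀) (dist x' x₀)) ≤ dist (f x) (f x'))
    (hfs : ∀ y : Y, ∃ x : X, dist y (f x) ≤ u (dist y y₀))
    (x : ℕ → X) (σ : ℕ → ℝ) (hσpos : ∀ n, 0 < σ n)
    (hσ : Tendsto σ atTop atTop)
    (hadm : Tendsto (fun n => u (dist (x n) x₀) / σ n) atTop (𝓝 0))
    (y : ℕ → Y) (M : ℝ) (hM : 0 ≤ M)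
    (hy : ∀ n, dist (f (x n)) (y n) ≤ M * σ n) :
    ∃ (x' : ℕ → X) (M' : ℝ), 0 ≤ M' ∧ (∀ n, dist (x n) (x' n) ≤ M' * σ n) ∧
      Tendsto (fun n => dist (f (x' n)) (y n) / σ n) atTop (𝓝 0) := by
  obtain ⟨C, hC1, hC⟩ := hudbl
  have hC0 : 0 < C := zero_lt_one.trans_le hC1
  have hL0 : 0 < L := zero_lt_one.trans_le hL
  have huy : Tendsto (fun n => u (dist (y n) y₀) / σ n) atTop (𝓝 0) :=
    tendsto_apply_dist_div_of_dist_le_mul hu0 humono hC0.le hC husub hL0.le y₀ hf hσpos hσ hadm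
      hM hy
  choose x' hx' using fun n => hfs (y n)
  obtain ⟨B, hB⟩ :=
    exists_apply_add_le_mul_add hu0 humono hC0 hC husub (by positivity : 0 < (2 * L)⁻¹)
  have hfar : ∀ n, dist (x n) (x' n)
      ≤ 2 * L * (M * σ n + u (dist (y n) y₀) + C * u (dist (x n) x₀) + B) := fun n => by
    refine (dist_le_of_expansive humono hL0 hfe hB _ _).trans ?_
    gcongr
    exact (dist_triangle _ (y n) _).trans (add_le_add (hy n) (hx' n))
  have hg : Tendsto (fun n => (M * σ n + u (dist (y n) y₀) + C * u (dist (x n) x₀) + B) / σ n)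
      atTop (𝓝 (M + 0 + C * 0 + 0)) :=
    (((tendsto_const_nhds.add huy).add (hadm.const_mul C)).add
      ((tendsto_const_nhds (x := B)).div_atTop hσ)).congr fun n => by
        field_simp [(hσpos n).ne']
  obtain ⟨K, hK0, hK⟩ := exists_le_mul_of_tendsto_div hσpos hg
  refine ⟨x', 2 * L * K, by positivity, fun n => (hfar n).trans ?_, ?_⟩
  · rw [mul_assoc (2 * L)]
    exact mul_le_mul_of_nonneg_left (hK n) (by positivity)
  · refine squeeze_zero (fun n => div_nonneg dist_nonneg (hσpos n).le) (fun n => ?_) huy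
    exact div_le_div_of_nonneg_right ((dist_comm _ _).trans_le (hx' n)) (hσpos n).le
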